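/- For every k ≥ 0, if H_0,…,H_{k-1} are nowhere zero then the operator identity T_i∘B_k = L_k∘B_{k-1} + (T_j^k(b)·)∘B_k + (H_k·)∘B_{k-1} holds on 𝔊. -/
import Mathlib


/-!
Discrete (quad-graph) setting: the space `𝔊` is modelled by `QG = ℤ → ℤ → ℝ`
(functions `φ(i,j)`), with the shifts `Ti`, `Tj`, their inverses, and the
`k`-fold shifts `TiZ k`, `TjZ k`.  For `g : QG`, pointwise multiplication
`g * φ` models the operator `g·`.
-/

/-- The function space `𝔊` of functions `ℤ² → ℝ`. -/
abbrev QG : Type := ℤ → ℤ → ℝ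

namespace QG

noncomputable section

/-- The shift operator `T_i(φ)(i,j) = φ(i+1,j)`. -/
def Ti (φ : QG) : QG := fun i j => φ (i + 1) j

/-- The shift operator `T_j(φ)(i,j) = φ(i,j+1)`. -/
def Tj (φ : QG) : QG := fun i j => φ i (j + 1)

/-- The `k`-fold shift in `i`. -/
def TiZ (k : ℤ) (φ : QG) : QG := fun i j => φ (i + k) j

/-- The `k`-fold shift in `j`. -/
def TjZ (k : ℤ) (φ : QG) : QG := fun i j => φ i (j + k)

/-- The inverse shift `T_i⁻¹`. -/
def TiInv (φ : QG) : QG := fun i j => φ (i - 1) j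

/-- The inverse shift `T_j⁻¹`. -/
def TjInv (φ : QG) : QG := fun i j => φ i (j - 1)

/-- A function that is nowhere zero. -/
def NowhereZero (φ : QG) : Prop := ∀ i j, φ i j ≠ 0

/-- The linearization operator `L = T_i∘T_j − a·T_i − b·T_j − c·`. -/
def L (a b c : QG) (φ : QG) : QG := Ti (Tj φ) - a * Ti φ - b * Tj φ - c * φ

/-- The pair `(b_k, H_k)` of the Laplace j-transformations:
`b_0 = a`, `H_0 = c + b·T_i⁻¹(a)`,
`b_{k+1} = T_i⁻¹(b_k)·T_j(H_k)/H_k`,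
`H_{k+1} = T_j(H_k) − T_j^k(b)·b_{k+1} + T_j^{k+1}(b)·T_i⁻¹(b_{k+1})`. -/
def bH (a b c : QG) : ℕ → QG × QG
  | 0 => (a, c + b * TiInv a)
  | k + 1 =>
      let bk := TiInv (bH a b c k).1 * Tj (bH a b c k).2 / (bH a b c k).2
      (bk, Tj (bH a b c k).2 - TjZ (k : ℤ) b * bk + TjZ ((k : ℤ) + 1) b * TiInv bk)

/-- The function `b_k`. -/
def bj (a b c : QG) (k : ℕ) : QG := (bH a b c k).1

/-- The Laplace j-invariant `H_k`. -/
def Hj (a b c : QG) (k : ℕ) : QG := (bH a b c k).2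

/-- The operator `L_k`: `L_0 = L` and
`L_k = (T_i − T_j^k(b)·)∘(T_j − T_i⁻¹(b_k)·) − H_k·` for `k ≥ 1`. -/
def Lk (a b c : QG) : ℕ → QG → QG
  | 0, φ => L a b c φ
  | k + 1, φ =>
      Ti (Tj φ - TiInv (bj a b c (k + 1)) * φ)
        - TjZ ((k : ℤ) + 1) b * (Tj φ - TiInv (bj a b c (k + 1)) * φ)
        - Hj a b c (k + 1) * φ

/-- `Bo (k+1)` is the operator `B_k = (T_j − T_i⁻¹(b_k)·)∘B_{k-1}`; `Bo 0 = id` is `B_{-1}`. -/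
def Bo (a b c : QG) : ℕ → QG → QG
  | 0, φ => φ
  | k + 1, φ => Tj (Bo a b c k φ) - TiInv (bj a b c k) * Bo a b c k φ

/-- `Bbar k` is the operator `B̄_k`: `B̄_0 = id`, `B̄_k = (T_j − b_k·)∘B̄_{k-1}`. -/
def Bbar (a b c : QG) : ℕ → QG → QG
  | 0, φ => φ
  | k + 1, φ => Tj (Bbar a b c k φ) - bj a b c (k + 1) * Bbar a b c k φ

/-- `Rchain p` is the composition
`((1/H_0)·)∘(T_i − b·)∘((1/H_1)·)∘(T_i − T_j(b)·)∘···∘((1/H_{p-1})·)∘(T_i − T_j^{p-1}(b)·)`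
(the identity for `p = 0`). -/
def Rchain (a b c : QG) : ℕ → QG → QG
  | 0, φ => φ
  | k + 1, φ => Rchain a b c k ((1 / Hj a b c k) * (Ti φ - TjZ (k : ℤ) b * φ))

end
/-- For every `k ≥ 0`, if `H_0, …, H_{k-1}` are nowhere zero then the
operator identity `T_i∘B_k = L_k∘B_{k-1} + (T_j^k(b)·)∘B_k + (H_k·)∘B_{k-1}` holds
on `𝔊`. (Here `B_k = Bo (k+1)` and `B_{k-1} = Bo k`.) -/
theorem statement11 (a b c : QG) (k : ℕ) (hH : ∀ m, m < k → NowhereZero (Hj a b c m)) :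
    ∀ φ : QG,
      Ti (Bo a b c (k + 1) φ)
        = Lk a b c k (Bo a b c k φ) + TjZ (k : ℤ) b * Bo a b c (k + 1) φ
            + Hj a b c k * Bo a b c k φ := by
  intro φ
  cases k with
  | zero =>
      funext i j
      simp [Bo, Lk, L, Ti, Tj, TiInv, TjZ, bj, Hj, bH]
      ring
  | succ k =>
      funext i j
      simp only [Bo, Lk, Pi.add_apply, Pi.sub_apply, Pi.mul_apply, Ti, Tj, TiInv, TjZ]
      push_cast
      ring

end QG
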